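/- Consider the planar system ν' = -αν + f(wν+I) + (1/2)f''(wν+I)w²C, C' = -2αC + 2f'(wν+I)w(C + ν/N), and suppose f(I) = 0. Then (ν,C) = (0,0) is an equilibrium, and the Jacobian at (0,0) has trace 3(-α + wf'(I)) and determinant 2(-α + wf'(I))² − f'(I)f''(I)w³/N. In particular, if α = w f'(I) and f'(I) > 0, f''(I) < 0, w > 0, N > 0, the Jacobian at the origin has a pair of purely imaginary eigenvalues ±iω₀ with ω₀ = √(−f'(I)f''(I)w³/N). -/

import Mathlib

/-!
The Jacobian at the origin is computed term by term. The only delicate term is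
`½ f''(wν + I) w² C`: `f''` is merely continuous, but the term is a continuous factor times
a linear function vanishing at the origin, and such a product is differentiable there.
At `α = w f'(I)` the Jacobian has trace `0` and determinant `ω₀²`, so its characteristic
polynomial `X² + ω₀²` factors as `(X - iω₀)(X + iω₀)`.
-/

open Matrix Polynomial Asymptotics Filter Topology

theorem HasFDerivAt.smul_of_continuousAt_of_eq_zero {𝕜 E F : Type*} [NontriviallyNormedField 𝕜]
    [NormedAddCommGroup E] [NormedSpace 𝕜 E] [NormedAddCommGroup F] [NormedSpace 𝕜 F]
    {g : E → 𝕜} {h : E → F} {h' : E →L[𝕜] F} {x : E}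
    (hh : HasFDerivAt h h' x) (hg : ContinuousAt g x) (hx : h x = 0) :
    HasFDerivAt (fun y ↦ g y • h y) (g x • h') x := by
  have hg' : (fun y ↦ g y - g x) =o[𝓝 x] (fun _ ↦ (1 : 𝕜)) :=
    (isLittleO_one_iff 𝕜).2 (by simpa using hg.tendsto.sub_const (g x))
  have key := ((hg'.smul_isBigO hh.isBigO_sub).congr_right fun y ↦ one_smul _ _).add
    (hh.isLittleO.const_smul_left (g x))
  refine HasFDerivAt.of_isLittleO (key.congr_left fun y ↦ ?_)
  simp only [hx, Pi.smul_apply, FunLike.coe_smul, sub_zero, smul_zero, smul_sub, sub_smul]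
  abel

theorem Matrix.charpoly_map_ofReal_of_trace_eq_zero (M : Matrix (Fin 2) (Fin 2) ℝ) (ω : ℝ)
    (htr : M.trace = 0) (hdet : M.det = ω ^ 2) :
    (M.map Complex.ofReal).charpoly =
      (X - C (Complex.I * ω)) * (X - C (-(Complex.I * ω))) := by
  rw [show M.map Complex.ofReal = M.map Complex.ofRealHom from rfl, charpoly_map,
    charpoly_fin_two, htr, hdet]
  simp only [map_zero, zero_mul, sub_zero, Polynomial.map_add, Polynomial.map_pow, map_X, map_C]
  have hω : Complex.ofRealHom (ω ^ 2) = -(Complex.I * ω) ^ 2 := by simp [mul_pow]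
  rw [hω, map_neg, map_pow, map_neg]
  ring

section

variable {f : ℝ → ℝ} (α w I N : ℝ)

theorem hasFDerivAt_comp_affine_fst_zero (hf : DifferentiableAt ℝ f I) :
    HasFDerivAt (fun p : ℝ × ℝ ↦ f (w * p.1 + I))
      ((w * deriv f I) • ContinuousLinearMap.fst ℝ ℝ ℝ) (0, 0) := by
  have hin : HasFDerivAt (fun p : ℝ × ℝ ↦ w * p.1 + I)
      (w • ContinuousLinearMap.fst ℝ ℝ ℝ) (0, 0) :=
    ((hasFDerivAt_fst (𝕜 := ℝ)).const_mul w).add_const I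
  rw [mul_comm, ← smul_smul]
  exact hf.hasDerivAt.comp_hasFDerivAt_of_eq _ hin (by simp)

theorem continuousAt_comp_affine_fst_zero {g : ℝ → ℝ} (hg : ContinuousAt g I) :
    ContinuousAt (fun p : ℝ × ℝ ↦ g (w * p.1 + I)) (0, 0) := by
  exact ContinuousAt.comp_of_eq hg (by fun_prop) (by simp)

theorem hasFDerivAt_rate_rhs_zero (hf : DifferentiableAt ℝ f I)
    (hf'' : ContinuousAt (iteratedDeriv 2 f) I) :
    HasFDerivAt
      (fun p : ℝ × ℝ ↦
        -α * p.1 + f (w * p.1 + I) + (1/2) * iteratedDeriv 2 f (w * p.1 + I) * w^2 * p.2)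
      ((-α + w * deriv f I) • ContinuousLinearMap.fst ℝ ℝ ℝ +
          ((1/2) * iteratedDeriv 2 f I * w^2) • ContinuousLinearMap.snd ℝ ℝ ℝ) (0, 0) := by
  have hlin := (hasFDerivAt_fst (𝕜 := ℝ) (p := ((0 : ℝ), (0 : ℝ)))).const_mul (-α)
  have hcurv := hasFDerivAt_snd.smul_of_continuousAt_of_eq_zero
    (((continuousAt_comp_affine_fst_zero w I hf'').const_mul (1/2)).mul_const (w ^ 2)) rfl
  refine ((hlin.add (hasFDerivAt_comp_affine_fst_zero w I hf)).add hcurv).congr_fderiv ?_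
  ext <;> simp

theorem hasFDerivAt_covariance_rhs_zero (hf' : ContinuousAt (deriv f) I) :
    HasFDerivAt
      (fun p : ℝ × ℝ ↦ -2 * α * p.2 + 2 * deriv f (w * p.1 + I) * w * (p.2 + p.1 / N))
      ((2 * deriv f I * w / N) • ContinuousLinearMap.fst ℝ ℝ ℝ +
          (-2 * α + 2 * deriv f I * w) • ContinuousLinearMap.snd ℝ ℝ ℝ) (0, 0) := by
  have hlin := (hasFDerivAt_snd (𝕜 := ℝ) (p := ((0 : ℝ), (0 : ℝ)))).const_mul (-2 * α)
  have hmix : HasFDerivAt (fun p : ℝ × ℝ ↦ p.2 + p.1 / N)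
      (ContinuousLinearMap.snd ℝ ℝ ℝ + N⁻¹ • ContinuousLinearMap.fst ℝ ℝ ℝ) (0, 0) := by
    have hL : (fun p : ℝ × ℝ ↦ p.2 + p.1 / N) =
        ⇑(ContinuousLinearMap.snd ℝ ℝ ℝ + N⁻¹ • ContinuousLinearMap.fst ℝ ℝ ℝ) := by
      ext; simp [div_eq_inv_mul]
    exact hL ▸ ContinuousLinearMap.hasFDerivAt _
  have hcorr := hmix.smul_of_continuousAt_of_eq_zero
    (((continuousAt_comp_affine_fst_zero w I hf').const_mul 2).mul_const w) (by simp)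
  refine (hlin.add hcorr).congr_fderiv ?_
  ext <;> simp
  ring

end

/-- For the planar system `ν' = -αν + f(wν+I) + ½f''(wν+I)w²C`,
`C' = -2αC + 2f'(wν+I)w(C + ν/N)` with `f(I) = 0`: the origin is an equilibrium,
the Jacobian there has trace `3(-α + wf'(I))` and determinant
`2(-α + wf'(I))² - f'(I)f''(I)w³/N`; and if `α = wf'(I)` with `f'(I) > 0`,
`f''(I) < 0`, `w > 0`, `N > 0`, then the Jacobian has purely imaginary eigenvalues
`±iω₀`, `ω₀ = √(-f'(I)f''(I)w³/N)`. -/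
theorem finite_size_hopf_eigenvalues
    (α w Ie N : ℝ) (hN : 0 < N) (f : ℝ → ℝ) (hf : ContDiff ℝ 2 f)
    (hfI : f Ie = 0) :
    -- the origin is an equilibrium
    (-α * 0 + f (w * 0 + Ie) + (1/2) * iteratedDeriv 2 f (w * 0 + Ie) * w^2 * 0 = 0 ∧
      -2 * α * 0 + 2 * deriv f (w * 0 + Ie) * w * (0 + 0 / N) = 0) ∧
    -- the Jacobian of the vector field at the origin
    HasFDerivAt
      (fun p : ℝ × ℝ =>
        ((-α * p.1 + f (w * p.1 + Ie) + (1/2) * iteratedDeriv 2 f (w * p.1 + Ie) * w^2 * p.2,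
          -2 * α * p.2 + 2 * deriv f (w * p.1 + Ie) * w * (p.2 + p.1 / N)) : ℝ × ℝ))
      (ContinuousLinearMap.prod
        ((-α + w * deriv f Ie) • ContinuousLinearMap.fst ℝ ℝ ℝ +
          ((1/2) * iteratedDeriv 2 f Ie * w^2) • ContinuousLinearMap.snd ℝ ℝ ℝ)
        ((2 * deriv f Ie * w / N) • ContinuousLinearMap.fst ℝ ℝ ℝ +
          (-2 * α + 2 * deriv f Ie * w) • ContinuousLinearMap.snd ℝ ℝ ℝ))
      ((0 : ℝ), (0 : ℝ)) ∧
    -- trace and determinant of the Jacobian matrix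
    (!![-α + w * deriv f Ie, (1/2) * iteratedDeriv 2 f Ie * w^2;
        2 * deriv f Ie * w / N, -2 * α + 2 * deriv f Ie * w] :
          Matrix (Fin 2) (Fin 2) ℝ).trace = 3 * (-α + w * deriv f Ie) ∧
    (!![-α + w * deriv f Ie, (1/2) * iteratedDeriv 2 f Ie * w^2;
        2 * deriv f Ie * w / N, -2 * α + 2 * deriv f Ie * w] :
          Matrix (Fin 2) (Fin 2) ℝ).det =
      2 * (-α + w * deriv f Ie)^2 - deriv f Ie * iteratedDeriv 2 f Ie * w^3 / N ∧
    -- purely imaginary eigenvalues at the bifurcation point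
    (α = w * deriv f Ie → 0 < deriv f Ie → iteratedDeriv 2 f Ie < 0 → 0 < w →
      ((!![-α + w * deriv f Ie, (1/2) * iteratedDeriv 2 f Ie * w^2;
          2 * deriv f Ie * w / N, -2 * α + 2 * deriv f Ie * w] :
            Matrix (Fin 2) (Fin 2) ℝ).map (Complex.ofReal)).charpoly =
        (X - C (Complex.I * (Real.sqrt (-(deriv f Ie) * iteratedDeriv 2 f Ie * w^3 / N) : ℝ))) *
          (X - C (-(Complex.I *
            (Real.sqrt (-(deriv f Ie) * iteratedDeriv 2 f Ie * w^3 / N) : ℝ))))) := by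
  set J : Matrix (Fin 2) (Fin 2) ℝ := !![-α + w * deriv f Ie, (1/2) * iteratedDeriv 2 f Ie * w^2;
    2 * deriv f Ie * w / N, -2 * α + 2 * deriv f Ie * w]
  have htrace : J.trace = 3 * (-α + w * deriv f Ie) := by
    simp [J, trace_fin_two]
    ring
  have hdet :
      J.det = 2 * (-α + w * deriv f Ie)^2 - deriv f Ie * iteratedDeriv 2 f Ie * w^3 / N := by
    simp [J, det_fin_two]
    ring
  have hrate := hasFDerivAt_rate_rhs_zero α w Ie (hf.differentiable (by norm_num) Ie)
    (hf.continuous_iteratedDeriv 2 le_rfl).continuousAt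
  have hcov := hasFDerivAt_covariance_rhs_zero α w Ie N
    (hf.continuous_deriv (by norm_num)).continuousAt
  refine ⟨⟨by simp [hfI], by simp⟩, hrate.prodMk hcov, htrace, hdet, fun hα hf' hf'' hw ↦
    J.charpoly_map_ofReal_of_trace_eq_zero _ ?_ ?_⟩
  · rw [htrace, hα]
    ring
  · have hω : 0 ≤ -deriv f Ie * iteratedDeriv 2 f Ie * w ^ 3 / N := by
      have := mul_pos (mul_pos hf' (neg_pos.2 hf'')) (pow_pos hw 3)
      exact div_nonneg (by linarith) hN.le
    rw [hdet, hα, Real.sq_sqrt hω]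
    ring
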